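/- Let f(θ) = sin(θ/2)·tan(θ/2) for θ ∈ (0, π). Then f is strictly increasing on (0, π), f(θ) → ∞ as θ → π⁻, and the unique θ ∈ (0, π) with f(θ) = 2 is θ* = 4·arctan(√(√2 − 1)). (θ* ≈ 2.287 is the transition angle at which the locally accessible information J^W(A|C) = S_A − E^W(A:B) becomes positive for two symmetric boundary intervals of angular size θ in pure AdS₃.) -/

import Mathlib

open Real Filter Set Topology

/-- `f(θ) = sin(θ/2)·tan(θ/2)`, the quantity controlling the transition of the
locally accessible information `J^W(A|C)` in pure AdS₃. -/
noncomputable def jwProfile (θ : ℝ) : ℝ := Real.sin (θ / 2) * Real.tan (θ / 2)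

/-- The transition angle `θ* = 4·arctan(√(√2 − 1))`. -/
noncomputable def thetaStar : ℝ := 4 * Real.arctan (Real.sqrt (Real.sqrt 2 - 1))

/-! On `(0, π)` the half angle lies in `(0, π/2)`, where `sin` and `tan` are positive and strictly
increasing, so their product is strictly increasing; at `π/2` the sine tends to `1` and the tangent
to `+∞`. Writing `c = cos(θ/2)`, the profile is `(1 - c²)/c`, which equals `2` exactly when
`c = √2 - 1`; the double-angle formula `cos(2 arctan t) = (1 - t²)/(1 + t²)` with `t² = √2 - 1`
shows that `θ*` is this angle, and monotonicity makes it the only one. -/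

theorem jwProfile_strictMonoOn : StrictMonoOn jwProfile (Ioo 0 π) := by
  intro a ha b hb hab
  have := pi_pos
  have ha' : a / 2 ∈ Ioo 0 (π / 2) := ⟨by linarith [ha.1], by linarith [ha.2]⟩
  have hb' : b / 2 ∈ Ioo 0 (π / 2) := ⟨by linarith [hb.1], by linarith [hb.2]⟩
  have hsin : sin (a / 2) < sin (b / 2) :=
    strictMonoOn_sin ⟨by linarith [ha'.1], ha'.2.le⟩ ⟨by linarith [hb'.1], hb'.2.le⟩ (by linarith)
  have htan : tan (a / 2) < tan (b / 2) :=
    strictMonoOn_tan ⟨by linarith [ha'.1], ha'.2⟩ ⟨by linarith [hb'.1], hb'.2⟩ (by linarith)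
  exact mul_lt_mul hsin htan.le (tan_pos_of_pos_of_lt_pi_div_two ha'.1 ha'.2)
    (sin_nonneg_of_nonneg_of_le_pi hb'.1.le (by linarith [hb'.2]))

theorem tendsto_div_two_nhdsLT (a : ℝ) : Tendsto (fun θ : ℝ => θ / 2) (𝓝[<] a) (𝓝[<] (a / 2)) :=
  tendsto_nhdsWithin_of_tendsto_nhds_of_eventually_within _
    ((continuous_id.div_const 2).tendsto a |>.mono_left nhdsWithin_le_nhds)
    (eventually_nhdsWithin_of_forall fun θ (hθ : θ < a) => show θ / 2 < a / 2 by linarith)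

theorem tendsto_jwProfile_atTop : Tendsto jwProfile (𝓝[<] π) atTop := by
  have hsin : Tendsto (fun θ : ℝ => sin (θ / 2)) (𝓝[<] π) (𝓝 1) := by
    have := ((continuous_sin.comp (continuous_id.div_const 2)).tendsto π).mono_left
      (nhdsWithin_le_nhds (s := Iio π))
    simpa only [Function.comp_def, id, sin_pi_div_two] using this
  exact hsin.pos_mul_atTop one_pos (tendsto_tan_pi_div_two.comp (tendsto_div_two_nhdsLT π))

theorem jwProfile_eq_cos (θ : ℝ) :
    jwProfile θ = (1 - cos (θ / 2) ^ 2) / cos (θ / 2) := by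
  rw [jwProfile, tan_eq_sin_div_cos, ← sin_sq, mul_div_assoc', sq]

theorem cos_two_mul_arctan (x : ℝ) : cos (2 * arctan x) = (1 - x ^ 2) / (1 + x ^ 2) := by
  have : 1 + x ^ 2 ≠ 0 := by positivity
  rw [cos_two_mul, cos_sq_arctan]
  field_simp
  ring

theorem four_mul_arctan_mem_Ioo {t : ℝ} (h₀ : 0 < t) (h₁ : t < 1) : 4 * arctan t ∈ Ioo 0 π := by
  have hpos : 0 < arctan t := arctan_pos.mpr h₀
  have hlt : arctan t < π / 4 := arctan_one ▸ arctan_strictMono h₁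
  constructor <;> linarith

theorem sqrt_sqrt_two_sub_one_mem_Ioo : √(√2 - 1) ∈ Ioo 0 1 := by
  have : √2 < 2 := by rw [sqrt_lt' two_pos]; norm_num
  exact ⟨sqrt_pos.mpr (by linarith [one_lt_sqrt_two]), (sqrt_lt' one_pos).mpr (by linarith)⟩

theorem thetaStar_mem_Ioo : thetaStar ∈ Ioo 0 π :=
  four_mul_arctan_mem_Ioo sqrt_sqrt_two_sub_one_mem_Ioo.1 sqrt_sqrt_two_sub_one_mem_Ioo.2

theorem cos_half_thetaStar : cos (thetaStar / 2) = √2 - 1 := by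
  have hsq : √2 ^ 2 = 2 := sq_sqrt zero_le_two
  have ht : √(√2 - 1) ^ 2 = √2 - 1 := sq_sqrt (by linarith [one_lt_sqrt_two])
  have : √2 ≠ 0 := by positivity
  rw [thetaStar, show 4 * arctan √(√2 - 1) / 2 = 2 * arctan √(√2 - 1) by ring,
    cos_two_mul_arctan, ht]
  field_simp
  linear_combination -hsq

theorem jwProfile_thetaStar : jwProfile thetaStar = 2 := by
  have hsq : √2 ^ 2 = 2 := sq_sqrt zero_le_two
  have : √2 - 1 ≠ 0 := by linarith [one_lt_sqrt_two]
  rw [jwProfile_eq_cos, cos_half_thetaStar]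
  field_simp
  linear_combination -hsq

/-- `f(θ) = sin(θ/2)·tan(θ/2)` is strictly increasing on `(0, π)`, tends to `∞` as
`θ → π⁻`, and the unique `θ ∈ (0, π)` with `f(θ) = 2` is `θ* = 4·arctan(√(√2 − 1))`. -/
theorem jwProfile_transition :
    StrictMonoOn jwProfile (Set.Ioo 0 π) ∧
      Tendsto jwProfile (nhdsWithin π (Set.Iio π)) atTop ∧
      thetaStar ∈ Set.Ioo 0 π ∧
      ∀ θ ∈ Set.Ioo 0 π, (jwProfile θ = 2 ↔ θ = thetaStar) := by
  refine ⟨jwProfile_strictMonoOn, tendsto_jwProfile_atTop, thetaStar_mem_Ioo, fun θ hθ => ?_⟩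
  rw [← jwProfile_thetaStar]
  exact jwProfile_strictMonoOn.injOn.eq_iff hθ thetaStar_mem_Ioo
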